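/- arXiv:1503.01249 — 2 statements merged into one kernel-verified Lean document; each statement's English description precedes it below -/
import Mathlib

section
/- With the notation of Cut-HDMR, if ν : ℝ^q → ℝ is a polynomial in which every monomial involves at most s distinct variables, then ν̂_s = ν exactly. -/
open Finset

/-- For a function `f : ℝ^q → ℝ` and a subset `S ⊆ {1,...,q}`, `cutComponent f S b` is `f`
evaluated at the vector whose coordinates in `S` equal those of `b` and whose remaining
coordinates are `0`. -/
noncomputable def cutComponent {q : ℕ} (f : (Fin q → ℝ) → ℝ) (S : Finset (Fin q))
    (b : Fin q → ℝ) : ℝ :=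
  f fun k => if k ∈ S then b k else 0

/-- The `s`-variate Cut-HDMR approximation (anchored at `0`) of `f : ℝ^q → ℝ`. -/
noncomputable def cutHDMR {q : ℕ} (s : ℕ) (f : (Fin q → ℝ) → ℝ) (b : Fin q → ℝ) : ℝ :=
  ∑ i ∈ Finset.range (s + 1),
    (-1 : ℝ) ^ (s - i) * (Nat.choose (q - i - 1) (s - i)) *
      ∑ S ∈ (Finset.univ : Finset (Fin q)).powersetCard i, cutComponent f S b

/-! Both sides are linear in `ν`, so it suffices to treat a monomial `x ↦ ∏_{k ∈ T} x_k ^ α_k`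
with `#T = t ≤ s`. Its cut component on `S` is the monomial itself if `T ⊆ S` and `0` otherwise,
and `C(q - t, i - t)` of the `i`-subsets contain `T`, so `ν̂_s` is the monomial times
`∑_j (-1)^(m-j) C(n-j-1, m-j) C(n, j)` with `n = q - t`, `m = s - t < n`. By upper negation,
`(-1)^k C(n-j-1, k) = C(m-n, k)` for `k = m - j`, so this sum is the Chu–Vandermonde convolution
`C(n + (m - n), m) = C(m, m) = 1`. -/

theorem sum_neg_one_pow_mul_choose_mul_choose_eq_one {m n : ℕ} (hmn : m < n) :
    ∑ j ∈ range (m + 1), (-1 : ℤ) ^ (m - j) * (n - j - 1).choose (m - j) * n.choose j = 1 := by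
  have h := Ring.add_choose_eq (r := (n : ℤ)) (s := -((n - m : ℕ) : ℤ)) m (Commute.all _ _)
  rw [show (n : ℤ) + -((n - m : ℕ) : ℤ) = m by omega, Ring.choose_natCast, Nat.choose_self,
    Nat.cast_one, Nat.sum_antidiagonal_eq_sum_range_succ
      (fun i j => Ring.choose (n : ℤ) i * Ring.choose (-((n - m : ℕ) : ℤ)) j)] at h
  refine (sum_congr rfl fun j hj => ?_).trans h.symm
  have hj : j ≤ m := Nat.lt_succ_iff.mp (mem_range.mp hj)
  rw [Ring.choose_neg, Ring.choose_natCast,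
    show ((n - m : ℕ) : ℤ) + (m - j : ℕ) - 1 = (n - j - 1 : ℕ) by omega,
    Ring.choose_natCast, Units.smul_def, Int.coe_negOnePow_natCast, smul_eq_mul]
  ring

theorem sum_range_card_filter_powersetCard_subset_smul {M : Type*} [AddCommMonoid M] {α : Type*}
    [Fintype α] [DecidableEq α] (T : Finset α) {s : ℕ} (hT : #T ≤ s) (w : ℕ → M) :
    ∑ i ∈ range (s + 1), #{S ∈ univ.powersetCard i | T ⊆ S} • w i =
      ∑ j ∈ range (s - #T + 1), (Fintype.card α - #T).choose j • w (#T + j) := by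
  rw [show s + 1 = #T + (s - #T + 1) by omega, sum_range_add]
  have hsmall : ∀ i ∈ range #T, #{S ∈ univ.powersetCard i | T ⊆ S} • w i = 0 := by
    intro i hi
    rw [card_eq_zero.mpr, zero_smul]
    refine filter_eq_empty_iff.mpr fun S hS hTS => ?_
    have := card_le_card hTS
    rw [(mem_powersetCard.mp hS).2] at this
    exact (mem_range.mp hi).not_ge this
  rw [sum_eq_zero hsmall, zero_add]
  refine sum_congr rfl fun j _ => ?_
  rw [card_filter_powersetCard_subset T univ _ (subset_univ T) (by omega), card_univ,
    Nat.add_sub_cancel_left]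

section

variable {q : ℕ}

theorem cutHDMR_sum {ι : Type*} (A : Finset ι) (f : ι → (Fin q → ℝ) → ℝ) (s : ℕ)
    (b : Fin q → ℝ) :
    cutHDMR s (fun x => ∑ a ∈ A, f a x) b = ∑ a ∈ A, cutHDMR s (f a) b := by
  simp only [cutHDMR, cutComponent, sum_comm (s := A), mul_sum]

theorem cutHDMR_const_mul (c : ℝ) (f : (Fin q → ℝ) → ℝ) (s : ℕ) (b : Fin q → ℝ) :
    cutHDMR s (fun x => c * f x) b = c * cutHDMR s f b := by
  simp only [cutHDMR, cutComponent, mul_sum]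
  exact sum_congr rfl fun _ _ => sum_congr rfl fun _ _ => by ring

theorem cutComponent_monomial (α : Fin q →₀ ℕ) (S : Finset (Fin q)) (b : Fin q → ℝ) :
    cutComponent (fun x => ∏ k ∈ α.support, x k ^ α k) S b =
      if α.support ⊆ S then ∏ k ∈ α.support, b k ^ α k else 0 := by
  simp only [cutComponent]
  split_ifs with hS
  · exact prod_congr rfl fun k hk => by rw [if_pos (hS hk)]
  · obtain ⟨k, hkα, hkS⟩ := not_subset.mp hS
    exact prod_eq_zero hkα (by rw [if_neg hkS, zero_pow (Finsupp.mem_support_iff.mp hkα)])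

theorem cutHDMR_monomial {s : ℕ} (hs : s < q) {α : Fin q →₀ ℕ} (hα : #α.support ≤ s)
    (b : Fin q → ℝ) :
    cutHDMR s (fun x => ∏ k ∈ α.support, x k ^ α k) b = ∏ k ∈ α.support, b k ^ α k := by
  have hcount : ∀ i, ∑ S ∈ univ.powersetCard i,
      cutComponent (fun x => ∏ k ∈ α.support, x k ^ α k) S b =
        #{S ∈ univ.powersetCard i | α.support ⊆ S} • ∏ k ∈ α.support, b k ^ α k := by
    intro i
    simp only [cutComponent_monomial, sum_ite, sum_const_zero, add_zero, sum_const]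
  simp only [cutHDMR, hcount, mul_smul_comm]
  rw [sum_range_card_filter_powersetCard_subset_smul _ hα, Fintype.card_fin]
  have hn : ∑ j ∈ range (s - #α.support + 1), (-1 : ℝ) ^ (s - #α.support - j) *
      ((q - #α.support - j - 1).choose (s - #α.support - j) : ℝ) *
        ((q - #α.support).choose j : ℝ) = 1 := by
    exact_mod_cast sum_neg_one_pow_mul_choose_mul_choose_eq_one (Nat.sub_lt_sub_right hα hs)
  conv_rhs => rw [← one_mul (∏ k ∈ α.support, b k ^ α k), ← hn, sum_mul]
  refine sum_congr rfl fun j _ => ?_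
  rw [nsmul_eq_mul, Nat.sub_add_eq, Nat.sub_add_eq]
  ring

end

/-- If `ν : ℝ^q → ℝ` is a polynomial in which every monomial involves at most `s` distinct
variables, then the truncated Cut-HDMR expansion is exact: `ν̂_s = ν`. -/
theorem cutHDMR_exact_of_low_interaction (q s : ℕ) (hs : s < q)
    (ν : MvPolynomial (Fin q) ℝ)
    (hν : ∀ α ∈ ν.support, α.support.card ≤ s) (b : Fin q → ℝ) :
    cutHDMR s (fun x => MvPolynomial.eval x ν) b = MvPolynomial.eval b ν := by
  simp only [MvPolynomial.eval_eq]
  rw [cutHDMR_sum]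
  refine sum_congr rfl fun α hα => ?_
  rw [cutHDMR_const_mul, cutHDMR_monomial hs (hν α hα)]
end

section
/- For integers 1 ≤ w ≤ s < q, the alternating binomial identity ∑_{i=w}^{s} (-1)^{s-i} C(q-i-1, s-i) C(q-w, i-w) = 1 holds. -/
/-!
With `i = w + j`, `k = s - w` and `a = q - s - 1`, the sign and the first binomial combine into
`C(-(a + 1), k - j) = (-1)^(k - j) C(a + k - j, k - j)`, so the sum is the Chu–Vandermonde
convolution for `C((q - w) - (a + 1), k) = C(k, k) = 1`.
-/

open Finset

theorem Ring.choose_neg_natCast_succ {R : Type*} [Ring R] [BinomialRing R] (a k : ℕ) :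
    Ring.choose (-(a + 1 : R)) k = (-1) ^ k * ((a + k).choose k : R) := by
  rw [Ring.choose_neg, show (a + 1 + k - 1 : R) = ((a + k : ℕ) : R) by push_cast; abel,
    Ring.choose_natCast, Units.smul_def, zsmul_eq_mul, Int.coe_negOnePow_natCast]
  push_cast
  rfl

theorem sum_range_neg_one_pow_mul_choose_mul_choose (a b k : ℕ) :
    ∑ j ∈ range (k + 1), (-1 : ℤ) ^ (k - j) * ((a + (k - j)).choose (k - j)) * (b.choose j) =
      Ring.choose ((b : ℤ) - a - 1) k := by
  rw [show (b : ℤ) - a - 1 = b + -(a + 1) by ring, Ring.add_choose_eq k (Commute.all _ _),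
    Nat.sum_antidiagonal_eq_sum_range_succ (fun i j => Ring.choose (b : ℤ) i *
      Ring.choose (-(a + 1 : ℤ)) j)]
  refine sum_congr rfl fun j _ => ?_
  rw [Ring.choose_natCast, Ring.choose_neg_natCast_succ]
  ring

theorem cutHDMR_monomial_identity_general (q s w : ℕ) (hws : w ≤ s) (hsq : s < q) :
    ∑ i ∈ Finset.Icc w s,
      (-1 : ℤ) ^ (s - i) * (Nat.choose (q - i - 1) (s - i)) * (Nat.choose (q - w) (i - w)) = 1 := by
  have hsum := sum_range_neg_one_pow_mul_choose_mul_choose (q - s - 1) (q - w) (s - w)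
  have hk : ((q - w : ℕ) : ℤ) - (q - s - 1 : ℕ) - 1 = (s - w : ℕ) := by omega
  rw [hk, Ring.choose_natCast, Nat.choose_self, Nat.cast_one] at hsum
  rw [← Ico_add_one_right_eq_Icc, sum_Ico_eq_sum_range, Nat.sub_add_comm hws]
  refine Eq.trans (sum_congr rfl fun j hj => ?_) hsum
  have hjk : j ≤ s - w := Nat.lt_succ_iff.mp (mem_range.mp hj)
  rw [show q - (w + j) - 1 = q - s - 1 + (s - w - j) by omega,
    show s - (w + j) = s - w - j by omega, Nat.add_sub_cancel_left]

/-- For integers `1 ≤ w ≤ s < q`, the alternating binomial identity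
`∑_{i=w}^{s} (-1)^{s-i} C(q-i-1, s-i) C(q-w, i-w) = 1` holds. -/
theorem cutHDMR_monomial_identity (q s w : ℕ) (hw : 1 ≤ w) (hws : w ≤ s) (hsq : s < q) :
    ∑ i ∈ Finset.Icc w s,
      (-1 : ℤ) ^ (s - i) * (Nat.choose (q - i - 1) (s - i)) * (Nat.choose (q - w) (i - w)) = 1 :=
  cutHDMR_monomial_identity_general q s w hws hsq
end
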